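/- Let a₀ ∈ ℝ, let θ : ℝ → ℝ be bounded, measurable, and even, and let f₀ : ℝ → ℝ be nonnegative and Lebesgue integrable with f₀(a₀ + x) = f₀(a₀ − x) for Lebesgue-almost every x ∈ ℝ (i.e., f₀ is symmetric about a₀). Then μ_θ[f₀; a₀] = 0. (In particular, for an initial opinion density symmetric about the measurement threshold, the initial rate of change of the sub-threshold opinion fraction vanishes for every nonnegative symmetric interaction kernel, so such measurements cannot distinguish between interaction kernels.) -/
import Mathlib


open MeasureTheory Set

/-- The measurement bracket `Ψ_a(x₁,x₂) = 2·𝟙[(x₁+x₂)/2 ≤ a] − 𝟙[x₁ ≤ a] − 𝟙[x₂ ≤ a]`. -/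
noncomputable def Psi (a x₁ x₂ : ℝ) : ℝ :=
  2 * (if (x₁ + x₂) / 2 ≤ a then (1 : ℝ) else 0)
    - (if x₁ ≤ a then (1 : ℝ) else 0) - (if x₂ ≤ a then (1 : ℝ) else 0)

/-- The initial measurement rate `μ_θ[f₀; a]`. -/
noncomputable def mu (θ f₀ : ℝ → ℝ) (a : ℝ) : ℝ :=
  ∫ p : ℝ × ℝ, θ (p.1 - p.2) * f₀ p.1 * f₀ p.2 * Psi a p.1 p.2

lemma psi_refl (a x₁ x₂ : ℝ) (h1 : x₁ ≠ a) (h2 : x₂ ≠ a) (h3 : x₁ + x₂ ≠ 2 * a) :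
    Psi a (2 * a - x₁) (2 * a - x₂) = - Psi a x₁ x₂ := by
  have e1 : ((2 * a - x₁) + (2 * a - x₂)) / 2 ≤ a ↔ ¬ ((x₁ + x₂) / 2 ≤ a) := by
    constructor
    · intro h hc; exact h3 (le_antisymm (by linarith) (by linarith))
    · intro h; push_neg at h; linarith
  have e2 : 2 * a - x₁ ≤ a ↔ ¬ (x₁ ≤ a) := by
    constructor
    · intro h hc; exact h1 (le_antisymm hc (by linarith))
    · intro h; push_neg at h; linarith
  have e3 : 2 * a - x₂ ≤ a ↔ ¬ (x₂ ≤ a) := by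
    constructor
    · intro h hc; exact h2 (le_antisymm hc (by linarith))
    · intro h; push_neg at h; linarith
  simp only [Psi, e1, e2, e3]
  by_cases hc1 : (x₁ + x₂) / 2 ≤ a <;> by_cases hc2 : x₁ ≤ a <;> by_cases hc3 : x₂ ≤ a <;>
    simp [hc1, hc2, hc3] <;> norm_num

lemma ae_fst_prop {p : ℝ → Prop} (h : ∀ᵐ x : ℝ, p x) :
    ∀ᵐ q : ℝ × ℝ, p q.1 := by
  rw [ae_iff] at h ⊢
  have hsub : {q : ℝ × ℝ | ¬ p q.1} ⊆ {x | ¬ p x} ×ˢ (Set.univ : Set ℝ) :=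
    fun q hq => ⟨hq, trivial⟩
  refine measure_mono_null hsub ?_
  rw [Measure.volume_eq_prod, Measure.prod_prod, h, zero_mul]

lemma ae_snd_prop {p : ℝ → Prop} (h : ∀ᵐ x : ℝ, p x) :
    ∀ᵐ q : ℝ × ℝ, p q.2 := by
  rw [ae_iff] at h ⊢
  have hsub : {q : ℝ × ℝ | ¬ p q.2} ⊆ (Set.univ : Set ℝ) ×ˢ {x | ¬ p x} :=
    fun q hq => ⟨trivial, hq⟩
  refine measure_mono_null hsub ?_
  rw [Measure.volume_eq_prod, Measure.prod_prod, h, mul_zero]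

theorem stmt15 (a₀ : ℝ) (θ f₀ : ℝ → ℝ)
    (hθm : Measurable θ) (hθb : ∃ K, ∀ r, |θ r| ≤ K) (hθe : ∀ r, θ (-r) = θ r)
    (hf₀ : ∀ x, 0 ≤ f₀ x) (hf₀i : Integrable f₀)
    (hsym : ∀ᵐ x : ℝ, f₀ (a₀ + x) = f₀ (a₀ - x)) :
    mu θ f₀ a₀ = 0 := by
  set F : ℝ × ℝ → ℝ := fun p => θ (p.1 - p.2) * f₀ p.1 * f₀ p.2 * Psi a₀ p.1 p.2 with hF
  -- the reflection as a measurable equiv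
  set E : (ℝ × ℝ) ≃ᵐ (ℝ × ℝ) :=
    (MeasurableEquiv.subLeft (2 * a₀)).prodCongr (MeasurableEquiv.subLeft (2 * a₀)) with hE
  have hEapp : ∀ p : ℝ × ℝ, E p = (2 * a₀ - p.1, 2 * a₀ - p.2) := fun p => rfl
  have hT : MeasurePreserving (⇑E) (volume : Measure (ℝ × ℝ)) volume := by
    have h := (Measure.measurePreserving_sub_left (volume : Measure ℝ) (2 * a₀)).prod
      (Measure.measurePreserving_sub_left (volume : Measure ℝ) (2 * a₀))
    rw [Measure.volume_eq_prod]
    exact h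
  -- symmetry of f₀ about a₀, reformulated
  have h1 : ∀ᵐ y : ℝ, f₀ (2 * a₀ - y) = f₀ y := by
    have h := (measurePreserving_add_right (volume : Measure ℝ) (-a₀)).quasiMeasurePreserving.ae
      hsym
    filter_upwards [h] with y hy
    rw [show a₀ + (y + -a₀) = y from by ring, show a₀ - (y + -a₀) = 2 * a₀ - y from by ring] at hy
    exact hy.symm
  have hne : ∀ᵐ y : ℝ, y ≠ a₀ := by
    rw [ae_iff]
    simpa using (measure_singleton a₀ : volume {a₀} = 0)
  have hline : ∀ᵐ p : ℝ × ℝ, p.1 + p.2 ≠ 2 * a₀ := by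
    rw [Measure.volume_eq_prod, Measure.ae_prod_iff_ae_ae]
    · refine Filter.Eventually.of_forall fun x => ?_
      rw [ae_iff]
      have : {y : ℝ | ¬ x + y ≠ 2 * a₀} = {2 * a₀ - x} := by
        ext y; simp [not_not]; constructor <;> intro h <;> linarith
      rw [this]
      exact measure_singleton _
    · have : MeasurableSet {p : ℝ × ℝ | p.1 + p.2 = 2 * a₀} :=
        (measurable_fst.add measurable_snd) (measurableSet_singleton (2 * a₀))
      exact this.compl
  have hae : (fun p => F (E p)) =ᵐ[(volume : Measure (ℝ × ℝ))] fun p => - F p := by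
    filter_upwards [ae_fst_prop h1, ae_snd_prop h1, ae_fst_prop hne, ae_snd_prop hne, hline]
      with p hp1 hp2 hq1 hq2 hl
    rw [hEapp]
    simp only [hF]
    rw [show (2 * a₀ - p.1) - (2 * a₀ - p.2) = -(p.1 - p.2) from by ring, hθe, hp1, hp2,
      psi_refl a₀ p.1 p.2 hq1 hq2 hl]
    ring
  have key : ∫ p : ℝ × ℝ, F p = - ∫ p : ℝ × ℝ, F p := by
    conv_lhs => rw [← hT.integral_comp' F]
    rw [integral_congr_ae hae, integral_neg]
  have : mu θ f₀ a₀ = ∫ p : ℝ × ℝ, F p := rfl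
  rw [this]
  linarith [key]
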